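/- Let d ≥ 1 be an integer, δ ∈ (0,1), and let N be a finite collection of measurable subsets of [0,1]^d, each of Lebesgue measure at least δ, with |N| ≥ 3. Let M = ⌊3·ln|N|/δ⌋ and let x_1, …, x_M be independent random points, each uniformly distributed on [0,1]^d. Then with probability at least 1 − 1/|N|, every set A ∈ N contains at least one of the points x_1, …, x_M. -/

import Mathlib

open MeasureTheory Real Set ProbabilityTheory

noncomputable section

/-- The unit cube `[0,1]^d`. -/
def cube (d : ℕ) : Set (Fin d → ℝ) := Set.univ.pi fun _ => Set.Icc 0 1

/-- Axis-parallel boxes `∏ [aᵢ, bᵢ)` with `0 ≤ aᵢ ≤ bᵢ ≤ 1`. -/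
def IsBox {d : ℕ} (B : Set (Fin d → ℝ)) : Prop :=
  ∃ a b : Fin d → ℝ, (∀ i, 0 ≤ a i ∧ a i ≤ b i ∧ b i ≤ 1) ∧
    B = Set.univ.pi fun i => Set.Ico (a i) (b i)

/-- Periodic axis-parallel boxes on the torus: in each coordinate the factor is
`(aᵢ, bᵢ)` if `aᵢ < bᵢ`, and `[0,1] \ [bᵢ, aᵢ]` if `bᵢ < aᵢ`. -/
def IsPeriodicBox {d : ℕ} (B : Set (Fin d → ℝ)) : Prop :=
  ∃ a b : Fin d → ℝ, a ∈ cube d ∧ b ∈ cube d ∧ (∀ i, a i ≠ b i) ∧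
    B = Set.univ.pi fun i =>
      if a i < b i then Set.Ioo (a i) (b i) else Set.Icc 0 1 \ Set.Icc (b i) (a i)

/-- `d`-dimensional Lebesgue volume, as a real number. -/
def vol {d : ℕ} (B : Set (Fin d → ℝ)) : ℝ := (MeasureTheory.volume B).toReal

/-- Dispersion of a point set: supremum of volumes of boxes avoiding `P`. -/
def disp {d : ℕ} (P : Set (Fin d → ℝ)) : ℝ :=
  sSup {v | ∃ B : Set (Fin d → ℝ), IsBox B ∧ B ∩ P = ∅ ∧ v = vol B}

/-- Periodic (torus) dispersion of a point set. -/
def pdisp {d : ℕ} (P : Set (Fin d → ℝ)) : ℝ :=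
  sSup {v | ∃ B : Set (Fin d → ℝ), IsPeriodicBox B ∧ B ∩ P = ∅ ∧ v = vol B}

/-- Minimal dispersion `disp*(n,d)`. -/
def dispStar (n d : ℕ) : ℝ :=
  sInf {v | ∃ P : Finset (Fin d → ℝ), ↑P ⊆ cube d ∧ P.card = n ∧ v = disp (↑P : Set (Fin d → ℝ))}

/-- Minimal periodic dispersion `disp̃*(n,d)`. -/
def pdispStar (n d : ℕ) : ℝ :=
  sInf {v | ∃ P : Finset (Fin d → ℝ), ↑P ⊆ cube d ∧ P.card = n ∧ v = pdisp (↑P : Set (Fin d → ℝ))}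

/-- Inverse of the minimal dispersion, `N(ε,d)`. -/
def invDisp (ε : ℝ) (d : ℕ) : ℕ := sInf {n : ℕ | 0 < n ∧ dispStar n d ≤ ε}

/-- A `δ`-approximation of the family of boxes of volume at least `ε`. -/
def DeltaApprox {d : ℕ} (δ ε : ℝ) (𝒩 : Set (Set (Fin d → ℝ))) : Prop :=
  (∀ A ∈ 𝒩, IsBox A) ∧
  ∀ B : Set (Fin d → ℝ), IsBox B → ε ≤ vol B → ∃ B₀ ∈ 𝒩, B₀ ⊆ B ∧ δ ≤ vol B₀

/-- A `δ`-approximation of the family of periodic boxes of volume at least `ε`. -/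
def PeriodicDeltaApprox {d : ℕ} (δ ε : ℝ) (𝒩 : Set (Set (Fin d → ℝ))) : Prop :=
  (∀ A ∈ 𝒩, IsPeriodicBox A) ∧
  ∀ B : Set (Fin d → ℝ), IsPeriodicBox B → ε ≤ vol B → ∃ B₀ ∈ 𝒩, B₀ ⊆ B ∧ δ ≤ vol B₀

lemma key_real (n : ℕ) (hn : 3 ≤ n) (δ : ℝ) (h0 : 0 < δ) (h1 : δ < 1) :
    (n : ℝ) * (1 - δ) ^ (⌊3 * Real.log n / δ⌋₊) ≤ 1 / n := by
  set M : ℕ := ⌊3 * Real.log n / δ⌋₊ with hMdef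
  have hnR : (3 : ℝ) ≤ n := by exact_mod_cast hn
  have hn0 : (0 : ℝ) < n := by linarith
  have hfloor : 3 * Real.log n / δ - 1 < (M : ℝ) := Nat.sub_one_lt_floor _
  have hMδ : 3 * Real.log n - δ < δ * M := by
    have h2 : 3 * Real.log n / δ < (M : ℝ) + 1 := by linarith
    have := (div_lt_iff₀ h0).mp h2
    nlinarith
  have hpow : (1 - δ) ^ M ≤ Real.exp (-(δ * M)) := by
    have h3 : (1 - δ) ^ M ≤ (Real.exp (-δ)) ^ M := by
      apply pow_le_pow_left₀ (by linarith)
      have := Real.add_one_le_exp (-δ); linarith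
    have h4 : (Real.exp (-δ)) ^ M = Real.exp (-(δ * M)) := by
      rw [← Real.exp_nat_mul]; ring_nf
    linarith [h3, h4.le, h4.ge]
  have hexp3 : Real.exp (3 * Real.log n) = (n : ℝ) ^ 3 := by
    rw [show 3 * Real.log n = Real.log ((n:ℝ) ^ 3) by rw [Real.log_pow]; push_cast; ring]
    exact Real.exp_log (by positivity)
  have hkey : Real.exp (-(δ * M)) ≤ Real.exp δ / (n : ℝ) ^ 3 := by
    have : Real.exp (-(δ * M)) ≤ Real.exp (δ - 3 * Real.log n) :=
      Real.exp_le_exp.mpr (by linarith)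
    rwa [Real.exp_sub, hexp3] at this
  have he : Real.exp δ ≤ (n : ℝ) := by
    have h5 : Real.exp δ ≤ Real.exp 1 := Real.exp_le_exp.mpr h1.le
    have h6 : Real.exp 1 < 3 := by
      have := Real.exp_one_lt_d9; linarith
    linarith
  have hfin : (1 - δ) ^ M ≤ 1 / (n : ℝ) ^ 2 := by
    have : Real.exp δ / (n : ℝ) ^ 3 ≤ (n : ℝ) / (n : ℝ) ^ 3 := by
      apply div_le_div_of_nonneg_right he (by positivity) |>.trans_eq rfl
    have hnn : (n : ℝ) / (n : ℝ) ^ 3 = 1 / (n : ℝ) ^ 2 := by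
      field_simp
    nlinarith [hpow, hkey]
  calc (n : ℝ) * (1 - δ) ^ M ≤ (n : ℝ) * (1 / (n : ℝ) ^ 2) := by
        apply mul_le_mul_of_nonneg_left hfin hn0.le
    _ = 1 / n := by field_simp

lemma volume_cube (d : ℕ) : MeasureTheory.volume (cube d) = 1 := by
  simp [cube, volume_pi_pi, Real.volume_Icc_pi]


/-- If `𝒩` is a finite family of at least `3` measurable subsets of `[0,1]^d`, each of
measure at least `δ`, and `x₁, …, x_M` with `M = ⌊3 ln|𝒩|/δ⌋` are independent uniform random
points in `[0,1]^d`, then with probability at least `1 - 1/|𝒩|` every `A ∈ 𝒩` contains one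
of the points. -/
theorem random_piercing (d : ℕ) (hd : 1 ≤ d) (δ : ℝ) (hδ : δ ∈ Set.Ioo (0 : ℝ) 1)
    (𝒩 : Set (Set (Fin d → ℝ))) (hfin : 𝒩.Finite)
    (hmeas : ∀ A ∈ 𝒩, MeasurableSet A) (hsub : ∀ A ∈ 𝒩, A ⊆ cube d)
    (hvol : ∀ A ∈ 𝒩, δ ≤ vol A) (hcard : 3 ≤ 𝒩.ncard)
    (M : ℕ) (hM : M = ⌊3 * Real.log 𝒩.ncard / δ⌋₊)
    {Ω : Type*} [MeasurableSpace Ω] (μ : Measure Ω) [IsProbabilityMeasure μ]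
    (X : Fin M → Ω → (Fin d → ℝ)) (hXm : ∀ i, Measurable (X i))
    (hindep : iIndepFun X μ)
    (hdist : ∀ i, μ.map (X i) = MeasureTheory.volume.restrict (cube d)) :
    1 - 1 / (𝒩.ncard : ENNReal) ≤ μ {ω | ∀ A ∈ 𝒩, ∃ i, X i ω ∈ A} := by
  obtain ⟨hδ0, hδ1⟩ := hδ
  set n := 𝒩.ncard with hn
  have hnR : (3 : ℝ) ≤ n := by exact_mod_cast hcard
  -- per-set bad events
  set bad : Set (Fin d → ℝ) → Set Ω := fun A => ⋂ i, X i ⁻¹' Aᶜ with hbad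
  have hbadmeas : ∀ A ∈ 𝒩, MeasurableSet (bad A) := fun A hA =>
    MeasurableSet.iInter fun i => (hXm i) (hmeas A hA).compl
  have hAbound : ∀ A ∈ 𝒩, μ (bad A) ≤ ENNReal.ofReal ((1 - δ) ^ M) := by
    intro A hA
    have hAm := hmeas A hA
    have hprod : μ (bad A) = ∏ i : Fin M, μ (X i ⁻¹' Aᶜ) :=
      hindep.meas_iInter fun i => ⟨Aᶜ, hAm.compl, rfl⟩
    have hone : ∀ i : Fin M, μ (X i ⁻¹' Aᶜ) ≤ ENNReal.ofReal (1 - δ) := by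
      intro i
      have h1 : μ (X i ⁻¹' Aᶜ) = MeasureTheory.volume (cube d \ A) := by
        rw [← Measure.map_apply (hXm i) hAm.compl, hdist i,
          Measure.restrict_apply hAm.compl, Set.diff_eq, Set.inter_comm]
      have hAfin : MeasureTheory.volume A ≠ ⊤ := by
        have : MeasureTheory.volume A ≤ MeasureTheory.volume (cube d) :=
          measure_mono (hsub A hA)
        rw [volume_cube] at this
        exact (this.trans_lt ENNReal.one_lt_top).ne
      have h2 : MeasureTheory.volume (cube d \ A) =
          1 - MeasureTheory.volume A := by
        rw [measure_diff (hsub A hA) hAm.nullMeasurableSet hAfin, volume_cube]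
      have h3 : ENNReal.ofReal δ ≤ MeasureTheory.volume A :=
        ENNReal.ofReal_le_of_le_toReal (hvol A hA)
      have h4 : ENNReal.ofReal (1 - δ) = 1 - ENNReal.ofReal δ := by
        rw [← ENNReal.ofReal_one, ← ENNReal.ofReal_sub _ hδ0.le]
      rw [h1, h2, h4]
      exact tsub_le_tsub_left h3 1
    calc μ (bad A) = ∏ i : Fin M, μ (X i ⁻¹' Aᶜ) := hprod
      _ ≤ ∏ _i : Fin M, ENNReal.ofReal (1 - δ) := Finset.prod_le_prod' fun i _ => hone i
      _ = ENNReal.ofReal ((1 - δ) ^ M) := by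
          rw [Finset.prod_const, Finset.card_univ, Fintype.card_fin,
            ENNReal.ofReal_pow (by linarith)]
  -- union bound
  have hsetc : {ω | ∀ A ∈ 𝒩, ∃ i, X i ω ∈ A} = (⋃ A ∈ 𝒩, bad A)ᶜ := by
    ext ω
    simp only [hbad, Set.mem_setOf_eq, Set.mem_compl_iff, Set.mem_iUnion,
      Set.mem_iInter, Set.mem_preimage, Set.mem_compl_iff, not_exists]
    push_neg
    simp
  have hUm : MeasurableSet (⋃ A ∈ 𝒩, bad A) := hfin.measurableSet_biUnion hbadmeas
  have hUbound : μ (⋃ A ∈ 𝒩, bad A) ≤ 1 / (n : ENNReal) := by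
    have hbU : (⋃ A ∈ 𝒩, bad A) = ⋃ A ∈ hfin.toFinset, bad A := by simp
    have hle : μ (⋃ A ∈ 𝒩, bad A) ≤ ∑ A ∈ hfin.toFinset, μ (bad A) := by
      rw [hbU]; exact measure_biUnion_finset_le _ _
    have hsum : ∑ A ∈ hfin.toFinset, μ (bad A) ≤
        (n : ENNReal) * ENNReal.ofReal ((1 - δ) ^ M) := by
      calc ∑ A ∈ hfin.toFinset, μ (bad A)
          ≤ ∑ _A ∈ hfin.toFinset, ENNReal.ofReal ((1 - δ) ^ M) :=
            Finset.sum_le_sum fun A hA => hAbound A (hfin.mem_toFinset.mp hA)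
        _ = (n : ENNReal) * ENNReal.ofReal ((1 - δ) ^ M) := by
            rw [Finset.sum_const,
              show hfin.toFinset.card = n from (Set.ncard_eq_toFinset_card 𝒩 hfin).symm,
              nsmul_eq_mul]
    have hreal : (n : ENNReal) * ENNReal.ofReal ((1 - δ) ^ M) ≤ 1 / (n : ENNReal) := by
      have hn0 : (0:ℝ) < n := by linarith
      have h5 : (n : ENNReal) * ENNReal.ofReal ((1 - δ) ^ M)
          = ENNReal.ofReal ((n : ℝ) * (1 - δ) ^ M) := by
        rw [ENNReal.ofReal_mul hn0.le, ENNReal.ofReal_natCast]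
      have h6 : ENNReal.ofReal ((n:ℝ) * (1 - δ) ^ M) ≤ ENNReal.ofReal (1 / n) := by
        apply ENNReal.ofReal_le_ofReal
        rw [hM, hn]
        exact key_real _ hcard _ hδ0 hδ1
      have h7 : ENNReal.ofReal (1 / (n:ℝ)) = 1 / (n : ENNReal) := by
        rw [one_div, one_div, ENNReal.ofReal_inv_of_pos hn0, ENNReal.ofReal_natCast]
      rw [h5]; rw [h7] at h6; exact h6
    exact hle.trans (hsum.trans hreal)
  rw [hsetc, prob_compl_eq_one_sub hUm]
  exact tsub_le_tsub_left hUbound 1
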